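/- Let X_K ~ BIN(K, π) with fixed per-study power π satisfying 0 < π < π_0 < 1, and let the vote-counting test reject when X_K ≥ c_K, where c_K is the smallest integer such that P(BIN(K, π_0) ≥ c_K) ≤ α for fixed α ∈ (0,1). Then the power P(X_K ≥ c_K) converges to 0 as K → ∞. -/

import Mathlib

open Filter

/-- `P(BIN(n, q) ≥ m)`, the upper tail of a Binomial(n, q) distribution. -/
noncomputable def binomTail (n : ℕ) (q : ℝ) (m : ℕ) : ℝ :=
  ∑ i ∈ Finset.Icc m n, (n.choose i : ℝ) * q ^ i * (1 - q) ^ (n - i)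

lemma binomTerm_nonneg {q : ℝ} (hq0 : 0 ≤ q) (hq1 : q ≤ 1) (n i : ℕ) :
    0 ≤ (n.choose i : ℝ) * q ^ i * (1 - q) ^ (n - i) := by
  have h1 : (0:ℝ) ≤ 1 - q := by linarith
  positivity

lemma binomTail_nonneg {q : ℝ} (hq0 : 0 ≤ q) (hq1 : q ≤ 1) (n m : ℕ) :
    0 ≤ binomTail n q m :=
  Finset.sum_nonneg fun i _ => binomTerm_nonneg hq0 hq1 n i

lemma binomTail_anti {q : ℝ} (hq0 : 0 ≤ q) (hq1 : q ≤ 1) (n : ℕ) {m m' : ℕ}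
    (h : m ≤ m') : binomTail n q m' ≤ binomTail n q m := by
  apply Finset.sum_le_sum_of_subset_of_nonneg
  · exact Finset.Icc_subset_Icc h le_rfl
  · intro i _ _; exact binomTerm_nonneg hq0 hq1 n i

lemma binom_sum_one (q : ℝ) (n : ℕ) :
    ∑ i ∈ Finset.range (n+1), (n.choose i : ℝ) * q ^ i * (1 - q) ^ (n - i) = 1 := by
  calc ∑ i ∈ Finset.range (n+1), (n.choose i : ℝ) * q ^ i * (1 - q) ^ (n - i)
      = ∑ i ∈ Finset.range (n+1), q ^ i * (1 - q) ^ (n - i) * (n.choose i : ℝ) :=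
        Finset.sum_congr rfl fun i _ => by ring
    _ = (q + (1 - q)) ^ n := (add_pow q (1 - q) n).symm
    _ = 1 := by norm_num

lemma binomTail_split (q : ℝ) (n m : ℕ) (hmn : m ≤ n) :
    binomTail n q m
      = 1 - ∑ i ∈ Finset.range m, (n.choose i : ℝ) * q ^ i * (1 - q) ^ (n - i) := by
  have hsplit := Finset.sum_range_add_sum_Ico
    (fun i => (n.choose i : ℝ) * q ^ i * (1 - q) ^ (n - i)) (Nat.le_succ_of_le hmn)
  rw [binom_sum_one q n] at hsplit
  have hIco : Finset.Ico m (n+1) = Finset.Icc m n := by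
    rw [Finset.Ico_add_one_right_eq_Icc]
  rw [binomTail, ← hIco]
  linarith [hsplit]

lemma chernoff_upper {q : ℝ} (hq0 : 0 ≤ q) (hq1 : q ≤ 1) (n m : ℕ) {l : ℝ} (hl : 0 ≤ l) :
    binomTail n q m ≤ Real.exp (-(l * m)) * (q * Real.exp l + (1 - q)) ^ n := by
  have h1q : (0:ℝ) ≤ 1 - q := by linarith
  have key : (q * Real.exp l + (1 - q)) ^ n
      = ∑ i ∈ Finset.range (n+1),
          (n.choose i : ℝ) * (q * Real.exp l) ^ i * (1 - q) ^ (n - i) := by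
    rw [add_pow]
    exact Finset.sum_congr rfl fun i _ => by ring
  rw [key, Finset.mul_sum]
  calc binomTail n q m
      ≤ ∑ i ∈ Finset.Icc m n,
          Real.exp (-(l * m)) * ((n.choose i : ℝ) * (q * Real.exp l) ^ i * (1 - q) ^ (n - i)) := by
        apply Finset.sum_le_sum
        intro i hi
        have him : m ≤ i := (Finset.mem_Icc.mp hi).1
        have hexp : Real.exp (l*m) ≤ Real.exp (l*i) := by
          apply Real.exp_le_exp.mpr
          have : (m:ℝ) ≤ i := Nat.cast_le.mpr him
          nlinarith
        have hterm : 0 ≤ (n.choose i : ℝ) * q ^ i * (1 - q) ^ (n - i) :=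
          binomTerm_nonneg hq0 hq1 n i
        have hrhs : Real.exp (-(l * m)) * ((n.choose i : ℝ) * (q * Real.exp l) ^ i * (1 - q) ^ (n - i))
            = Real.exp (-(l*m)) * Real.exp (l*i) * ((n.choose i : ℝ) * q ^ i * (1 - q) ^ (n - i)) := by
          rw [mul_pow, ← Real.exp_nat_mul]
          ring_nf
        rw [hrhs]
        calc (n.choose i : ℝ) * q ^ i * (1 - q) ^ (n - i)
            = Real.exp (-(l*m)) * Real.exp (l*m) * ((n.choose i : ℝ) * q ^ i * (1 - q) ^ (n - i)) := by
              rw [← Real.exp_add]; simp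
          _ ≤ Real.exp (-(l*m)) * Real.exp (l*i) * ((n.choose i : ℝ) * q ^ i * (1 - q) ^ (n - i)) := by
              apply mul_le_mul_of_nonneg_right _ hterm
              exact mul_le_mul_of_nonneg_left hexp (Real.exp_nonneg _)
    _ ≤ ∑ i ∈ Finset.range (n+1),
          Real.exp (-(l * m)) * ((n.choose i : ℝ) * (q * Real.exp l) ^ i * (1 - q) ^ (n - i)) := by
        apply Finset.sum_le_sum_of_subset_of_nonneg
        · intro i hi
          simp only [Finset.mem_Icc] at hi
          exact Finset.mem_range.mpr (Nat.lt_succ_of_le hi.2)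
        · intro i _ _
          have : (0:ℝ) ≤ q * Real.exp l := by positivity
          positivity

lemma chernoff_lower {q : ℝ} (hq0 : 0 ≤ q) (hq1 : q ≤ 1) (n m : ℕ) (hmn : m ≤ n)
    {l : ℝ} (hl : 0 ≤ l) :
    ∑ i ∈ Finset.range (m+1), (n.choose i : ℝ) * q ^ i * (1 - q) ^ (n - i)
      ≤ Real.exp (l * m) * (q * Real.exp (-l) + (1 - q)) ^ n := by
  have h1q : (0:ℝ) ≤ 1 - q := by linarith
  have key : (q * Real.exp (-l) + (1 - q)) ^ n
      = ∑ i ∈ Finset.range (n+1),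
          (n.choose i : ℝ) * (q * Real.exp (-l)) ^ i * (1 - q) ^ (n - i) := by
    rw [add_pow]
    exact Finset.sum_congr rfl fun i _ => by ring
  rw [key, Finset.mul_sum]
  calc ∑ i ∈ Finset.range (m+1), (n.choose i : ℝ) * q ^ i * (1 - q) ^ (n - i)
      ≤ ∑ i ∈ Finset.range (m+1),
          Real.exp (l * m) * ((n.choose i : ℝ) * (q * Real.exp (-l)) ^ i * (1 - q) ^ (n - i)) := by
        apply Finset.sum_le_sum
        intro i hi
        have him : i ≤ m := Nat.lt_succ_iff.mp (Finset.mem_range.mp hi)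
        have hexp : Real.exp (l*i) ≤ Real.exp (l*m) := by
          apply Real.exp_le_exp.mpr
          have : (i:ℝ) ≤ m := Nat.cast_le.mpr him
          nlinarith
        have hterm : 0 ≤ (n.choose i : ℝ) * q ^ i * (1 - q) ^ (n - i) :=
          binomTerm_nonneg hq0 hq1 n i
        have hrhs : Real.exp (l * m) * ((n.choose i : ℝ) * (q * Real.exp (-l)) ^ i * (1 - q) ^ (n - i))
            = Real.exp (l*m) * Real.exp (-(l*i)) * ((n.choose i : ℝ) * q ^ i * (1 - q) ^ (n - i)) := by
          rw [mul_pow, ← Real.exp_nat_mul]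
          ring_nf
        rw [hrhs]
        calc (n.choose i : ℝ) * q ^ i * (1 - q) ^ (n - i)
            = Real.exp (l*i) * Real.exp (-(l*i)) * ((n.choose i : ℝ) * q ^ i * (1 - q) ^ (n - i)) := by
              rw [← Real.exp_add]; simp
          _ ≤ Real.exp (l*m) * Real.exp (-(l*i)) * ((n.choose i : ℝ) * q ^ i * (1 - q) ^ (n - i)) := by
              apply mul_le_mul_of_nonneg_right _ hterm
              exact mul_le_mul_of_nonneg_right hexp (Real.exp_nonneg _)
    _ ≤ ∑ i ∈ Finset.range (n+1),
          Real.exp (l * m) * ((n.choose i : ℝ) * (q * Real.exp (-l)) ^ i * (1 - q) ^ (n - i)) := by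
        apply Finset.sum_le_sum_of_subset_of_nonneg
        · exact Finset.range_subset_range.mpr (Nat.succ_le_succ hmn)
        · intro i _ _
          have : (0:ℝ) ≤ q * Real.exp (-l) := by positivity
          positivity

lemma exists_pos_lt_of_deriv {g : ℝ → ℝ} {d : ℝ} (hg : HasDerivAt g d 0) (hd : d < 0) :
    ∃ l : ℝ, 0 < l ∧ g l < g 0 := by
  have hs := hasDerivAt_iff_tendsto_slope.mp hg
  have h2 : ∀ᶠ x in nhdsWithin (0:ℝ) {(0:ℝ)}ᶜ, slope g 0 x < 0 :=
    hs.eventually_lt_const hd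
  have hle : nhdsWithin (0:ℝ) (Set.Ioi 0) ≤ nhdsWithin (0:ℝ) {(0:ℝ)}ᶜ :=
    nhdsWithin_mono 0 (fun x hx => ne_of_gt hx)
  have h3 : ∀ᶠ x in nhdsWithin (0:ℝ) (Set.Ioi 0), slope g 0 x < 0 := h2.filter_mono hle
  obtain ⟨l, hsl, hl0⟩ := (h3.and self_mem_nhdsWithin).exists
  refine ⟨l, hl0, ?_⟩
  rw [slope_def_field] at hsl
  have h5 : (g l - g 0) / (l - 0) < 0 := hsl
  rw [sub_zero] at h5
  rcases div_neg_iff.mp h5 with ⟨h, h'⟩ | ⟨h1, h2'⟩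
  · linarith
  · linarith

lemma keyfun (q t : ℝ) :
    HasDerivAt (fun l : ℝ => Real.exp (-(l*t)) * (q * Real.exp l + (1-q))) (q - t) 0 := by
  have h1 : HasDerivAt (fun l : ℝ => Real.exp (-(l*t))) (-t) 0 := by
    have ha : HasDerivAt (fun l : ℝ => -(l*t)) (-t) 0 := by
      exact (((hasDerivAt_id (0:ℝ)).mul_const t).neg).congr_deriv (by ring)
    have := ha.exp
    simpa using this
  have h2 : HasDerivAt (fun l : ℝ => q * Real.exp l + (1-q)) q 0 := by
    have := ((Real.hasDerivAt_exp 0).const_mul q).add_const (1-q)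
    simpa using this
  have := h1.mul h2
  simp only [neg_zero, zero_mul, Real.exp_zero, mul_one] at this
  exact this.congr_deriv (by ring)

lemma keyfun2 (q t : ℝ) :
    HasDerivAt (fun l : ℝ => Real.exp (l*t) * (q * Real.exp (-l) + (1-q))) (t - q) 0 := by
  have h1 : HasDerivAt (fun l : ℝ => Real.exp (l*t)) t 0 := by
    have ha : HasDerivAt (fun l : ℝ => l*t) t 0 := by
      simpa using (hasDerivAt_id (0:ℝ)).mul_const t
    have := ha.exp
    simpa using this
  have h2 : HasDerivAt (fun l : ℝ => q * Real.exp (-l) + (1-q)) (-q) 0 := by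
    have hb : HasDerivAt (fun l : ℝ => -l) (-1 : ℝ) 0 := (hasDerivAt_id 0).neg
    have := (hb.exp.const_mul q).add_const (1-q)
    simpa using this
  have := h1.mul h2
  simp only [zero_mul, Real.exp_zero, neg_zero, mul_one] at this
  exact this.congr_deriv (by ring)

set_option maxHeartbeats 1000000 in
/-- Supplement Theorem 1 (Hedges–Olkin): with per-study power `π` satisfying
`0 < π < π0 < 1` and the level-`α` vote-counting critical value
`c_K = min {c | P(BIN(K, π0) ≥ c) ≤ α}`, the power `P(BIN(K, π) ≥ c_K)`
converges to `0` as `K → ∞`. -/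
theorem vote_counting_power_tendsto_zero
    (π π0 α : ℝ) (hπ : 0 < π) (hππ0 : π < π0) (hπ0 : π0 < 1)
    (hα : α ∈ Set.Ioo (0:ℝ) 1) :
    Tendsto (fun K : ℕ =>
        binomTail K π (sInf {c : ℕ | binomTail K π0 c ≤ α}))
      atTop (nhds 0) := by
  obtain ⟨hα0, hα1⟩ := hα
  set t : ℝ := (π + π0)/2 with ht
  have ht1 : π < t := by simp only [ht]; linarith
  have ht2 : t < π0 := by simp only [ht]; linarith
  have ht0 : 0 < t := by linarith
  have htlt1 : t < 1 := by linarith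
  have hπ1 : π < 1 := by linarith
  have hπ00 : 0 < π0 := by linarith
  obtain ⟨l1, hl1pos, hl1⟩ := exists_pos_lt_of_deriv (keyfun π t) (by linarith)
  obtain ⟨l0, hl0pos, hl0⟩ := exists_pos_lt_of_deriv (keyfun2 π0 t) (by linarith)
  simp only [neg_zero, zero_mul, Real.exp_zero, mul_one] at hl1 hl0
  set r : ℝ := Real.exp (-(l1*t)) * (π * Real.exp l1 + (1-π)) with hrdef
  set s : ℝ := Real.exp (l0*t) * (π0 * Real.exp (-l0) + (1-π0)) with hsdef
  have hr1 : r < 1 := by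
    calc r < 1 * (π + (1 - π)) := hl1
      _ = 1 := by ring
  have hs1 : s < 1 := by
    calc s < 1 * (π0 + (1 - π0)) := hl0
      _ = 1 := by ring
  have hr0 : 0 ≤ r := by
    have h1 : (0:ℝ) ≤ 1 - π := by linarith
    have h2 : (0:ℝ) < Real.exp l1 := Real.exp_pos _
    have : 0 ≤ π * Real.exp l1 + (1-π) := by positivity
    positivity
  have hs0 : 0 ≤ s := by
    have h1 : (0:ℝ) ≤ 1 - π0 := by linarith
    have h2 : (0:ℝ) < Real.exp (-l0) := Real.exp_pos _
    have : 0 ≤ π0 * Real.exp (-l0) + (1-π0) := by positivity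
    positivity
  have hsK : Tendsto (fun K : ℕ => s^K) atTop (nhds 0) :=
    tendsto_pow_atTop_nhds_zero_of_lt_one hs0 hs1
  have hev : ∀ᶠ K : ℕ in atTop, s^K < 1 - α := hsK.eventually_lt_const (by linarith)
  have hev1 : ∀ᶠ K : ℕ in atTop, 1 ≤ K := eventually_ge_atTop 1
  have main : ∀ᶠ K : ℕ in atTop,
      binomTail K π (sInf {c : ℕ | binomTail K π0 c ≤ α}) ≤ r ^ K := by
    filter_upwards [hev, hev1] with K hK hK1
    have hKpos : (0:ℝ) < K := by exact_mod_cast hK1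
    set m : ℕ := ⌈t * K⌉₊ with hm
    have hmK : m ≤ K := Nat.ceil_le.mpr (by nlinarith)
    have hm1 : 1 ≤ m := Nat.ceil_pos.mpr (by positivity)
    have hmletK : (t * K : ℝ) ≤ m := Nat.le_ceil _
    -- Step 1: the lower tail below m is small, so binomTail K π0 m > α
    have hcast : ((m-1:ℕ):ℝ) ≤ t*K := by
      have hlt : (m:ℝ) < t*K + 1 := Nat.ceil_lt_add_one (by positivity)
      have heq : ((m-1:ℕ):ℝ) = (m:ℝ) - 1 := by
        rw [Nat.cast_sub hm1]; simp
      linarith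
    have hlow := chernoff_lower hπ00.le hπ0.le K (m-1)
      (le_trans (Nat.sub_le _ _) hmK) hl0pos.le
    have hmm : m - 1 + 1 = m := by omega
    rw [hmm] at hlow
    have hbound : ∑ i ∈ Finset.range m, (K.choose i : ℝ) * π0 ^ i * (1 - π0) ^ (K - i)
        ≤ s ^ K := by
      have hB0 : (0:ℝ) ≤ π0 * Real.exp (-l0) + (1-π0) := by
        have h1 : (0:ℝ) ≤ 1 - π0 := by linarith
        have h2 : (0:ℝ) < Real.exp (-l0) := Real.exp_pos _
        positivity
      have hexpmono : Real.exp (l0 * ((m-1:ℕ):ℝ)) ≤ Real.exp (l0 * (t*K)) := by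
        apply Real.exp_le_exp.mpr
        nlinarith
      have hsk : s ^ K = Real.exp (l0 * (t*K)) * (π0 * Real.exp (-l0) + (1-π0)) ^ K := by
        rw [hsdef, mul_pow, ← Real.exp_nat_mul]
        congr 2
        ring
      rw [hsk]
      calc ∑ i ∈ Finset.range m, (K.choose i : ℝ) * π0 ^ i * (1 - π0) ^ (K - i)
          ≤ Real.exp (l0 * ((m-1:ℕ):ℝ)) * (π0 * Real.exp (-l0) + (1-π0)) ^ K := hlow
        _ ≤ Real.exp (l0 * (t*K)) * (π0 * Real.exp (-l0) + (1-π0)) ^ K :=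
            mul_le_mul_of_nonneg_right hexpmono (pow_nonneg hB0 K)
    have htail : α < binomTail K π0 m := by
      rw [binomTail_split π0 K m hmK]
      have : ∑ i ∈ Finset.range m, (K.choose i : ℝ) * π0 ^ i * (1 - π0) ^ (K - i) < 1 - α :=
        lt_of_le_of_lt hbound hK
      linarith
    -- Step 2: m ≤ c_K
    have hSne : binomTail K π0 (K+1) ≤ α := by
      rw [binomTail]
      rw [Finset.Icc_eq_empty (by omega)]
      simpa using hα0.le
    have hcK : m ≤ sInf {c : ℕ | binomTail K π0 c ≤ α} := by
      apply le_csInf ⟨K+1, hSne⟩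
      intro c hc
      by_contra hcon
      push_neg at hcon
      have : binomTail K π0 m ≤ binomTail K π0 c :=
        binomTail_anti hπ00.le hπ0.le K hcon.le
      have : binomTail K π0 m ≤ α := le_trans this hc
      linarith
    -- Step 3: bound the power
    have hmono : binomTail K π (sInf {c : ℕ | binomTail K π0 c ≤ α}) ≤ binomTail K π m :=
      binomTail_anti hπ.le hπ1.le K hcK
    have hup := chernoff_upper hπ.le hπ1.le K m hl1pos.le
    have hA0 : (0:ℝ) ≤ π * Real.exp l1 + (1-π) := by
      have h1 : (0:ℝ) ≤ 1 - π := by linarith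
      have h2 : (0:ℝ) < Real.exp l1 := Real.exp_pos _
      positivity
    have hexpmono : Real.exp (-(l1 * (m:ℝ))) ≤ Real.exp (-(l1 * (t*K))) := by
      apply Real.exp_le_exp.mpr
      nlinarith
    have hrk : r ^ K = Real.exp (-(l1 * (t*K))) * (π * Real.exp l1 + (1-π)) ^ K := by
      rw [hrdef, mul_pow, ← Real.exp_nat_mul]
      congr 2
      ring
    calc binomTail K π (sInf {c : ℕ | binomTail K π0 c ≤ α})
        ≤ binomTail K π m := hmono
      _ ≤ Real.exp (-(l1 * (m:ℝ))) * (π * Real.exp l1 + (1-π)) ^ K := hup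
      _ ≤ Real.exp (-(l1 * (t*K))) * (π * Real.exp l1 + (1-π)) ^ K :=
          mul_le_mul_of_nonneg_right hexpmono (pow_nonneg hA0 K)
      _ = r ^ K := hrk.symm
  have hnn : ∀ᶠ K : ℕ in atTop,
      (0:ℝ) ≤ binomTail K π (sInf {c : ℕ | binomTail K π0 c ≤ α}) :=
    Eventually.of_forall fun K => binomTail_nonneg hπ.le hπ1.le K _
  exact tendsto_of_tendsto_of_tendsto_of_le_of_le' tendsto_const_nhds
    (tendsto_pow_atTop_nhds_zero_of_lt_one hr0 hr1) hnn main
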